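/- arXiv:1408.5689 — 2 statements merged into one kernel-verified Lean document; each statement's English description precedes it below -/
import Mathlib

section
/- Let n ≥ 1 be an integer and let U and U' be independent χ²-random variables, each with n degrees of freedom. Then for every real x > 0 one has Pr[U/(U+U') ≥ (n + 2√(n·x) + 2x)/(2(n + x))] ≤ 2e^{−x} and Pr[U/(U+U') ≤ (n − 2√(n·x))/(2(n + x))] ≤ 2e^{−x}. -/
/-!
For independent standard Gaussians `gᵢ`, `E exp (c ∑ gᵢ²) = (1 - 2c)^(-n/2)`, so Chernoff's
bound at the optimal `c`, with `1 + 2t + 2t² ≤ e^(2t)` and `1 - 2t ≤ e^(-2t - 2t²)`, gives the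
Laurent–Massart bounds `P(χ²ₙ ≥ n (1 + 2t + 2t²)) ≤ e^(-nt²)` and `P(χ²ₙ ≤ n (1 - 2t)) ≤ e^(-nt²)`.
At `t = √(x/n)` the two thresholds `a`, `b` are `n + 2√(nx) + 2x` and `n - 2√(nx)`, and
`a + b = 2(n + x)`. Finally `U/(U+U') ≥ a/(a+b)` forces `U ≥ a` or `U' ≤ b`, and symmetrically
for the lower tail, so a union bound costs a factor `2`.
-/

open MeasureTheory ProbabilityTheory Real

lemma one_sub_le_exp_neg_sub_sq_div_two {u : ℝ} (hu₀ : 0 ≤ u) (hu₁ : u < 1) :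
    1 - u ≤ exp (-u - u ^ 2 / 2) := by
  have hlog := hasSum_pow_div_log_of_abs_lt_one (x := u) (by rwa [abs_of_nonneg hu₀])
  have hpartial : u + u ^ 2 / 2 ≤ -log (1 - u) := by
    have := sum_le_hasSum (Finset.range 2) (fun n _ => by positivity) hlog
    norm_num [Finset.sum_range_succ] at this
    linarith
  calc 1 - u = exp (log (1 - u)) := (exp_log (by linarith)).symm
    _ ≤ exp (-u - u ^ 2 / 2) := exp_le_exp.mpr (by linarith)

-- For `c ≥ 1/2` both sides are junk zeros: the integrand is not integrable and `√` of a
-- negative number is `0`.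
lemma integral_exp_mul_sq_gaussianReal (c : ℝ) :
    ∫ y, exp (c * y ^ 2) ∂gaussianReal 0 1 = (√(1 - 2 * c))⁻¹ := by
  have hdensity : ∀ y : ℝ, gaussianPDFReal 0 1 y • exp (c * y ^ 2)
      = (√(2 * π))⁻¹ * exp (-(1 / 2 - c) * y ^ 2) := by
    intro y
    rw [gaussianPDFReal, smul_eq_mul, mul_assoc, ← exp_add]
    push_cast
    ring_nf
  rw [integral_gaussianReal_eq_integral_smul one_ne_zero]
  simp_rw [hdensity]
  rw [integral_const_mul, integral_gaussian, ← sqrt_inv, ← sqrt_inv,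
    ← sqrt_mul (by positivity)]
  congr 1
  field_simp

lemma mgf_sq_of_map_eq_gaussianReal {Ω : Type*} [MeasurableSpace Ω] {μ : Measure Ω}
    {g : Ω → ℝ} (hg : μ.map g = gaussianReal 0 1) (c : ℝ) :
    mgf (fun ω => g ω ^ 2) μ c = (√(1 - 2 * c))⁻¹ := by
  have hg_meas : AEMeasurable g μ := .of_map_ne_zero (by rw [hg]; exact NeZero.ne _)
  rw [← integral_exp_mul_sq_gaussianReal c, ← hg]
  exact (mgf_map (X := fun y => y ^ 2) hg_meas (by fun_prop)).symm

lemma exists_nonneg_eq_mul_sq_and_sqrt_mul_eq {n x : ℝ} (hn : 0 < n) (hx : 0 ≤ x) :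
    ∃ t ≥ 0, x = n * t ^ 2 ∧ √(n * x) = n * t := by
  refine ⟨√(x / n), sqrt_nonneg _, by rw [sq_sqrt (by positivity)]; field_simp, ?_⟩
  rw [← sqrt_sq (by positivity : 0 ≤ n * √(x / n)), mul_pow, sq_sqrt (by positivity)]
  field_simp

section SumOfSquares

variable {Ω ι : Type*} [MeasurableSpace Ω] {μ : Measure Ω} [Fintype ι] {f : ι → Ω → ℝ}

lemma mgf_sum_sq (hindep : iIndepFun f μ) (hgauss : ∀ i, μ.map (f i) = gaussianReal 0 1)
    (c : ℝ) :
    mgf (fun ω => ∑ i, f i ω ^ 2) μ c = (√(1 - 2 * c))⁻¹ ^ Fintype.card ι := by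
  have hsq : iIndepFun (fun i ω => f i ω ^ 2) μ :=
    hindep.comp (fun _ y => y ^ 2) (fun _ => by fun_prop)
  have hsq_meas : ∀ i, AEMeasurable (fun ω => f i ω ^ 2) μ := fun i =>
    (AEMeasurable.of_map_ne_zero (by rw [hgauss i]; exact NeZero.ne _)).pow_const 2
  rw [← Finset.sum_fn, hsq.mgf_sum₀ hsq_meas,
    Finset.prod_congr rfl fun i _ => mgf_sq_of_map_eq_gaussianReal (hgauss i) c]
  simp

variable [IsProbabilityMeasure μ]

lemma integrable_exp_mul_sum_sq (hindep : iIndepFun f μ)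
    (hgauss : ∀ i, μ.map (f i) = gaussianReal 0 1) {c : ℝ} (hc : c < 1 / 2) :
    Integrable (fun ω => exp (c * ∑ i, f i ω ^ 2)) μ :=
  mgf_pos_iff.mp <| by
    rw [mgf_sum_sq hindep hgauss c]
    exact pow_pos (inv_pos.mpr (sqrt_pos.mpr (by linarith))) _

lemma measureReal_le_sum_sq_le (hindep : iIndepFun f μ)
    (hgauss : ∀ i, μ.map (f i) = gaussianReal 0 1) (a : ℝ) {c : ℝ} (hc₀ : 0 ≤ c) (hc : c < 1 / 2) :
    μ.real {ω | a ≤ ∑ i, f i ω ^ 2} ≤ exp (-c * a) * (√(1 - 2 * c))⁻¹ ^ Fintype.card ι := by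
  rw [← mgf_sum_sq hindep hgauss c]
  exact measure_ge_le_exp_mul_mgf a hc₀ (integrable_exp_mul_sum_sq hindep hgauss hc)

lemma measureReal_sum_sq_le_le (hindep : iIndepFun f μ)
    (hgauss : ∀ i, μ.map (f i) = gaussianReal 0 1) (a : ℝ) {c : ℝ} (hc : c ≤ 0) :
    μ.real {ω | ∑ i, f i ω ^ 2 ≤ a} ≤ exp (-c * a) * (√(1 - 2 * c))⁻¹ ^ Fintype.card ι := by
  rw [← mgf_sum_sq hindep hgauss c]
  exact measure_le_le_exp_mul_mgf a hc (integrable_exp_mul_sum_sq hindep hgauss (by linarith))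

lemma measureReal_le_sum_sq_le_exp_neg_mul_sq (hindep : iIndepFun f μ)
    (hgauss : ∀ i, μ.map (f i) = gaussianReal 0 1) {t : ℝ} (ht : 0 ≤ t) :
    μ.real {ω | Fintype.card ι * (1 + 2 * t + 2 * t ^ 2) ≤ ∑ i, f i ω ^ 2}
      ≤ exp (-(Fintype.card ι * t ^ 2)) := by
  set A := 1 + 2 * t + 2 * t ^ 2
  have hA : 0 < A := by positivity
  have hsqrtA : √A ≤ exp t := by
    rw [sqrt_le_left (exp_pos t).le, ← exp_nat_mul]
    have := quadratic_le_exp_of_nonneg (mul_nonneg zero_le_two ht)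
    convert this using 2 <;> push_cast <;> ring
  have hc : 1 - 2 * ((t + t ^ 2) / A) = A⁻¹ := by field_simp; ring
  have hc_lt : (t + t ^ 2) / A < 1 / 2 := by
    have := inv_pos.mpr hA
    linarith
  refine (measureReal_le_sum_sq_le hindep hgauss _ (by positivity) hc_lt).trans ?_
  rw [hc, sqrt_inv, inv_inv]
  calc exp (-((t + t ^ 2) / A) * (Fintype.card ι * A)) * √A ^ Fintype.card ι
      ≤ exp (-((t + t ^ 2) / A) * (Fintype.card ι * A)) * exp t ^ Fintype.card ι := by gcongr
    _ = exp (-(Fintype.card ι * t ^ 2)) := by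
      rw [← exp_nat_mul, ← exp_add]
      congr 1
      field_simp
      ring

lemma measureReal_sum_sq_le_le_exp_neg_mul_sq (hindep : iIndepFun f μ)
    (hgauss : ∀ i, μ.map (f i) = gaussianReal 0 1) {t : ℝ} (ht : 0 ≤ t) :
    μ.real {ω | ∑ i, f i ω ^ 2 ≤ Fintype.card ι * (1 - 2 * t)}
      ≤ exp (-(Fintype.card ι * t ^ 2)) := by
  rcases lt_or_ge t (1 / 2) with ht_small | ht_large
  · have hpos : 0 < 1 - 2 * t := by linarith
    have hsqrt : √(1 - 2 * t) ≤ exp (-t - t ^ 2) := by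
      rw [sqrt_le_left (exp_pos _).le, ← exp_nat_mul]
      have := one_sub_le_exp_neg_sub_sq_div_two (u := 2 * t) (by positivity) (by linarith)
      convert this using 2
      push_cast
      ring
    have hc : 1 - 2 * -(t / (1 - 2 * t)) = (1 - 2 * t)⁻¹ := by field_simp; ring
    refine (measureReal_sum_sq_le_le hindep hgauss _
      (neg_nonpos.mpr (div_nonneg ht hpos.le))).trans ?_
    rw [hc, sqrt_inv, inv_inv, neg_neg, div_mul_comm, mul_div_cancel_right₀ _ hpos.ne']
    calc exp (Fintype.card ι * t) * √(1 - 2 * t) ^ Fintype.card ι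
        ≤ exp (Fintype.card ι * t) * exp (-t - t ^ 2) ^ Fintype.card ι := by gcongr
      _ = exp (-(Fintype.card ι * t ^ 2)) := by
        rw [← exp_nat_mul, ← exp_add]
        ring_nf
  · -- The threshold is `≤ 0`, so any `c ≤ 0` with `√(1 - 2c) = e^(t²)` works.
    have hc : 1 - 2 * ((1 - exp (2 * t ^ 2)) / 2) = exp (t ^ 2) ^ 2 := by
      rw [← exp_nat_mul]
      push_cast
      ring
    have hc_nonpos : (1 - exp (2 * t ^ 2)) / 2 ≤ 0 := by
      have := one_le_exp (by positivity : 0 ≤ 2 * t ^ 2)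
      linarith
    refine (measureReal_sum_sq_le_le hindep hgauss _ hc_nonpos).trans ?_
    rw [hc, sqrt_sq (exp_pos _).le, ← exp_neg, ← exp_nat_mul, mul_neg]
    calc exp (-((1 - exp (2 * t ^ 2)) / 2) * (Fintype.card ι * (1 - 2 * t)))
          * exp (-(Fintype.card ι * t ^ 2))
        ≤ 1 * exp (-(Fintype.card ι * t ^ 2)) := by
          gcongr
          rw [exp_le_one_iff]
          have : (Fintype.card ι : ℝ) * (1 - 2 * t) ≤ 0 :=
            mul_nonpos_of_nonneg_of_nonpos (Nat.cast_nonneg _) (by linarith)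
          nlinarith
      _ = exp (-(Fintype.card ι * t ^ 2)) := one_mul _

lemma measureReal_le_sum_sq_le_exp_neg [Nonempty ι] (hindep : iIndepFun f μ)
    (hgauss : ∀ i, μ.map (f i) = gaussianReal 0 1) {x : ℝ} (hx : 0 ≤ x) :
    μ.real {ω | Fintype.card ι + 2 * √(Fintype.card ι * x) + 2 * x ≤ ∑ i, f i ω ^ 2}
      ≤ exp (-x) := by
  obtain ⟨t, ht, rfl, hsqrt⟩ :=
    exists_nonneg_eq_mul_sq_and_sqrt_mul_eq (Nat.cast_pos.mpr (Fintype.card_pos (α := ι))) hx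
  have hthreshold : Fintype.card ι + 2 * √(Fintype.card ι * (Fintype.card ι * t ^ 2))
      + 2 * (Fintype.card ι * t ^ 2) = Fintype.card ι * (1 + 2 * t + 2 * t ^ 2) := by
    rw [hsqrt]
    ring
  rw [hthreshold]
  exact measureReal_le_sum_sq_le_exp_neg_mul_sq hindep hgauss ht

lemma measureReal_sum_sq_le_le_exp_neg [Nonempty ι] (hindep : iIndepFun f μ)
    (hgauss : ∀ i, μ.map (f i) = gaussianReal 0 1) {x : ℝ} (hx : 0 ≤ x) :
    μ.real {ω | ∑ i, f i ω ^ 2 ≤ Fintype.card ι - 2 * √(Fintype.card ι * x)} ≤ exp (-x) := by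
  obtain ⟨t, ht, rfl, hsqrt⟩ :=
    exists_nonneg_eq_mul_sq_and_sqrt_mul_eq (Nat.cast_pos.mpr (Fintype.card_pos (α := ι))) hx
  have hthreshold : Fintype.card ι - 2 * √(Fintype.card ι * (Fintype.card ι * t ^ 2))
      = Fintype.card ι * (1 - 2 * t) := by
    rw [hsqrt]
    ring
  rw [hthreshold]
  exact measureReal_sum_sq_le_le_exp_neg_mul_sq hindep hgauss ht

end SumOfSquares

lemma le_or_le_of_div_add_le_div_add {u v a b : ℝ} (hu : 0 ≤ u) (hv : 0 ≤ v) (ha : 0 < a)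
    (hab : 0 < a + b) (h : a / (a + b) ≤ u / (u + v)) : a ≤ u ∨ v ≤ b := by
  by_contra! hcon
  obtain ⟨hua, hbv⟩ := hcon
  rcases (add_nonneg hu hv).eq_or_lt with huv | huv
  · rw [← huv, div_zero] at h
    exact (div_pos ha hab).not_ge h
  · rw [div_le_div_iff₀ hab huv] at h
    rcases hu.eq_or_lt with rfl | hu
    · nlinarith
    · nlinarith

lemma le_or_le_of_div_add_le_div_add' {u v a b : ℝ} (hu : 0 ≤ u) (hv : 0 ≤ v)
    (hab : 0 < a + b) (h : u / (u + v) ≤ b / (a + b)) : u ≤ b ∨ a ≤ v := by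
  by_contra! hcon
  obtain ⟨hbu, hva⟩ := hcon
  rcases (add_nonneg hu hv).eq_or_lt with huv | huv
  · rw [← huv, div_zero] at h
    exact (div_neg_of_neg_of_pos (by linarith) hab).not_ge h
  · rw [div_le_div_iff₀ huv hab] at h
    rcases hu.eq_or_lt with rfl | hu
    · nlinarith
    · nlinarith

section Ratio

variable {Ω : Type*} [MeasurableSpace Ω] {μ : Measure Ω} [IsFiniteMeasure μ] {U V : Ω → ℝ}
  {a b : ℝ}

lemma measureReal_le_div_add_le (hU : ∀ ω, 0 ≤ U ω) (hV : ∀ ω, 0 ≤ V ω) (ha : 0 < a)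
    (hab : 0 < a + b) :
    μ.real {ω | a / (a + b) ≤ U ω / (U ω + V ω)}
      ≤ μ.real {ω | a ≤ U ω} + μ.real {ω | V ω ≤ b} :=
  (measureReal_mono fun ω hω => le_or_le_of_div_add_le_div_add (hU ω) (hV ω) ha hab hω).trans
    (measureReal_union_le _ _)

lemma measureReal_div_add_le_le (hU : ∀ ω, 0 ≤ U ω) (hV : ∀ ω, 0 ≤ V ω) (hab : 0 < a + b) :
    μ.real {ω | U ω / (U ω + V ω) ≤ b / (a + b)}
      ≤ μ.real {ω | U ω ≤ b} + μ.real {ω | a ≤ V ω} :=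
  (measureReal_mono fun ω hω => le_or_le_of_div_add_le_div_add' (hU ω) (hV ω) hab hω).trans
    (measureReal_union_le _ _)

end Ratio

theorem chiSq_ratio_tail_general
    {Ω : Type*} [MeasurableSpace Ω] (μ : Measure Ω) [IsProbabilityMeasure μ]
    (n : ℕ) (hn : 1 ≤ n) (G : Fin (n + n) → Ω → ℝ)
    (hgauss : ∀ i, Measure.map (G i) μ = gaussianReal 0 1)
    (hindep : iIndepFun G μ)
    (U U' : Ω → ℝ)
    (hU : ∀ ω, U ω = ∑ i : Fin n, (G (Fin.castAdd n i) ω) ^ 2)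
    (hU' : ∀ ω, U' ω = ∑ i : Fin n, (G (Fin.natAdd n i) ω) ^ 2)
    (x : ℝ) (hx : 0 < x) :
    μ {ω | ((n : ℝ) + 2 * Real.sqrt (n * x) + 2 * x) / (2 * ((n : ℝ) + x))
          ≤ U ω / (U ω + U' ω)} ≤ ENNReal.ofReal (2 * Real.exp (-x)) ∧
    μ {ω | U ω / (U ω + U' ω)
          ≤ ((n : ℝ) - 2 * Real.sqrt (n * x)) / (2 * ((n : ℝ) + x))}
        ≤ ENNReal.ofReal (2 * Real.exp (-x)) := by
  have : Nonempty (Fin n) := ⟨⟨0, hn⟩⟩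
  have tails : ∀ {V : Ω → ℝ} {f : Fin n → Ω → ℝ}, iIndepFun f μ →
      (∀ i, μ.map (f i) = gaussianReal 0 1) → (∀ ω, V ω = ∑ i, f i ω ^ 2) →
      μ.real {ω | n + 2 * √(n * x) + 2 * x ≤ V ω} ≤ exp (-x) ∧
        μ.real {ω | V ω ≤ n - 2 * √(n * x)} ≤ exp (-x) := by
    intro V f hf hgf hV
    have hupper := measureReal_le_sum_sq_le_exp_neg hf hgf hx.le
    have hlower := measureReal_sum_sq_le_le_exp_neg hf hgf hx.le
    simp only [Fintype.card_fin, ← hV] at hupper hlower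
    exact ⟨hupper, hlower⟩
  obtain ⟨hU_upper, hU_lower⟩ :=
    tails (hindep.precomp (Fin.castAdd_injective n n)) (fun _ => hgauss _) hU
  obtain ⟨hU'_upper, hU'_lower⟩ :=
    tails (hindep.precomp (Fin.natAdd_injective n n)) (fun _ => hgauss _) hU'
  have hU₀ : ∀ ω, 0 ≤ U ω := fun ω => (hU ω) ▸ by positivity
  have hU'₀ : ∀ ω, 0 ≤ U' ω := fun ω => (hU' ω) ▸ by positivity
  have ha : 0 < (n : ℝ) + 2 * √(n * x) + 2 * x := by positivity
  have hsum : 2 * ((n : ℝ) + x) = (n + 2 * √(n * x) + 2 * x) + (n - 2 * √(n * x)) := by ring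
  have hab : 0 < (n : ℝ) + 2 * √(n * x) + 2 * x + (n - 2 * √(n * x)) := hsum ▸ by positivity
  rw [hsum]
  constructor <;> rw [← ofReal_measureReal] <;> refine ENNReal.ofReal_le_ofReal ?_
  · linarith [measureReal_le_div_add_le (μ := μ) hU₀ hU'₀ ha hab]
  · linarith [measureReal_div_add_le_le (μ := μ) hU₀ hU'₀ hab]

/-- **Tail bounds for the ratio `U/(U+U')` of two independent χ² variables with `n`
degrees of freedom.** Here the `2n` underlying standard Gaussians are jointly independent;
`U` is the sum of squares of the first `n` of them and `U'` of the last `n`.  For every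
`x > 0`, `Pr[U/(U+U') ≥ (n + 2√(nx) + 2x)/(2(n+x))] ≤ 2 e^{-x}` and
`Pr[U/(U+U') ≤ (n - 2√(nx))/(2(n+x))] ≤ 2 e^{-x}`. -/
theorem chiSq_ratio_tail
    {Ω : Type*} [MeasurableSpace Ω] (μ : Measure Ω) [IsProbabilityMeasure μ]
    (n : ℕ) (hn : 1 ≤ n) (G : Fin (n + n) → Ω → ℝ)
    (hmeas : ∀ i, Measurable (G i))
    (hgauss : ∀ i, Measure.map (G i) μ = gaussianReal 0 1)
    (hindep : iIndepFun G μ)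
    (U U' : Ω → ℝ)
    (hU : ∀ ω, U ω = ∑ i : Fin n, (G (Fin.castAdd n i) ω) ^ 2)
    (hU' : ∀ ω, U' ω = ∑ i : Fin n, (G (Fin.natAdd n i) ω) ^ 2)
    (x : ℝ) (hx : 0 < x) :
    μ {ω | ((n : ℝ) + 2 * Real.sqrt (n * x) + 2 * x) / (2 * ((n : ℝ) + x))
          ≤ U ω / (U ω + U' ω)} ≤ ENNReal.ofReal (2 * Real.exp (-x)) ∧
    μ {ω | U ω / (U ω + U' ω)
          ≤ ((n : ℝ) - 2 * Real.sqrt (n * x)) / (2 * ((n : ℝ) + x))}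
        ≤ ENNReal.ofReal (2 * Real.exp (-x)) :=
  chiSq_ratio_tail_general μ n hn G hgauss hindep U U' hU hU' x hx
end

section
/- Let m ≥ 1 and n ≥ 2 be integers, and let U₁, …, Uₙ be independent identically distributed random variables taking values in the finite alphabet {1, …, m}, with distribution p_i = Pr[U₁ = i] and Shannon entropy H(p) = −Σ_{i=1}^m p_i·log₂ p_i. Let p̂_i = (1/n)·#{k : U_k = i} be the empirical frequencies and Ĥ_MLE = −Σ_{i=1}^m p̂_i·log₂ p̂_i the empirical (maximum-likelihood) entropy. Let A be any event (measurable with respect to the σ-algebra generated by U₁, …, Uₙ) with p_A := Pr[A] > 0. Then for every real ε with 0 < ε ≤ 1, the probability, under the law of (U₁, …, Uₙ) conditioned on A, that H(p) ≤ Ĥ_MLE − √(2·(log₂ n)²·ln(2/ε)/n), is at most ε/p_A. -/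
/-!
As a function of the sample, the empirical entropy has bounded differences: changing one sample
moves one unit of count between two bins, which changes two terms of the entropy by at most
`log₂ n / n` each. Its mean is at most `H(p)` by Jensen's inequality for the concave function
`-x log x`, since `E p̂ = p`. McDiarmid's inequality, proved by integrating out one coordinate at a
time with Hoeffding's lemma, bounds `P(Ĥ_MLE ≥ H(p) + t)` by `exp (-2 t² / (n c²)) = ε / 2` for
`c = 2 log₂ n / n`. Conditioning on `A` inflates probabilities by at most `1 / P(A)`.
-/

open Real MeasureTheory ProbabilityTheory

theorem sum_mul_exp_le_of_sub_le {α : Type*} [Fintype α] {q v : α → ℝ} (hq0 : ∀ j, 0 ≤ q j)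
    (hq1 : ∑ j, q j = 1) {c : ℝ} (hv : ∀ j j', v j - v j' ≤ c) (t : ℝ) :
    ∑ j, q j * exp (t * v j) ≤ exp (t ^ 2 * c ^ 2 / 8) * exp (t * ∑ j, q j * v j) := by
  classical
  let _ : MeasurableSpace α := ⊤
  let ν : Measure α := ∑ j, ENNReal.ofReal (q j) • Measure.dirac j
  have : IsProbabilityMeasure ν :=
    ⟨by simp [ν, ← ENNReal.ofReal_sum_of_nonneg fun j _ => hq0 j, hq1]⟩
  have integral_ν (f : α → ℝ) : ∫ j, f j ∂ν = ∑ j, q j * f j := by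
    rw [integral_fintype .of_finite]
    simp [ν, Measure.real, Measure.dirac_apply', Set.indicator, ENNReal.toReal_ofReal (hq0 _)]
  have : Nonempty α := by
    by_contra h
    simp [not_nonempty_iff.mp h] at hq1
  obtain ⟨j₀, hj₀⟩ := Finite.exists_min v
  have hoeffding := (hasSubgaussianMGF_of_mem_Icc (μ := ν) (a := v j₀) (b := v j₀ + c)
    (X := v) Measurable.of_discrete.aemeasurable
    (ae_of_all _ fun j => ⟨hj₀ j, by linarith [hv j j₀]⟩)).mgf_le t
  rw [mgf, integral_ν, integral_ν] at hoeffding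
  have h_shift : ∑ j, q j * exp (t * (v j - ∑ i, q i * v i))
      = (∑ j, q j * exp (t * v j)) * exp (-(t * ∑ i, q i * v i)) := by
    rw [Finset.sum_mul]
    exact Finset.sum_congr rfl fun j _ => by rw [mul_assoc, ← exp_add]; ring_nf
  have h_var : (((‖v j₀ + c - v j₀‖₊ / 2) ^ 2 : NNReal) : ℝ) * t ^ 2 / 2 = t ^ 2 * c ^ 2 / 8 := by
    simp only [add_sub_cancel_left, NNReal.coe_pow, NNReal.coe_div, coe_nnnorm, Real.norm_eq_abs,
      div_pow, sq_abs, NNReal.coe_ofNat]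
    ring
  rw [h_shift, h_var, ← le_div_iff₀ (exp_pos _), ← exp_sub] at hoeffding
  rwa [← exp_add, ← sub_neg_eq_add]

section IID

variable {α : Type*} [Fintype α] {q : α → ℝ} {n : ℕ}

noncomputable def iidExpect (q : α → ℝ) (f : (Fin n → α) → ℝ) : ℝ :=
  ∑ x, (∏ k, q (x k)) * f x

lemma sum_prod_eq_one (hq1 : ∑ a, q a = 1) : ∑ x : Fin n → α, ∏ k, q (x k) = 1 := by
  rw [← Fintype.sum_pow, hq1, one_pow]

lemma iidExpect_const_mul (c : ℝ) (f : (Fin n → α) → ℝ) :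
    iidExpect q (fun x => c * f x) = c * iidExpect q f := by
  rw [iidExpect, iidExpect, Finset.mul_sum]
  exact Finset.sum_congr rfl fun x _ => mul_left_comm _ _ _

lemma iidExpect_div_const (f : (Fin n → α) → ℝ) (c : ℝ) :
    iidExpect q (fun x => f x / c) = iidExpect q f / c := by
  rw [iidExpect, iidExpect, Finset.sum_div]
  simp only [mul_div_assoc]

lemma iidExpect_sum {ι : Type*} (s : Finset ι) (f : ι → (Fin n → α) → ℝ) :
    iidExpect q (fun x => ∑ j ∈ s, f j x) = ∑ j ∈ s, iidExpect q (f j) := by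
  simp only [iidExpect, Finset.mul_sum]
  exact Finset.sum_comm

lemma iidExpect_mono (hq0 : ∀ a, 0 ≤ q a) {f g : (Fin n → α) → ℝ} (h : ∀ x, f x ≤ g x) :
    iidExpect q f ≤ iidExpect q g :=
  Finset.sum_le_sum fun x _ => mul_le_mul_of_nonneg_left (h x) (Finset.prod_nonneg fun _ _ => hq0 _)

lemma iidExpect_succ (f : (Fin (n + 1) → α) → ℝ) :
    iidExpect q f = iidExpect q (fun y => ∑ a, q a * f (Fin.cons a y)) := by
  rw [iidExpect, ← (Fin.consEquiv fun _ => α).sum_comp, Fintype.sum_prod_type, Finset.sum_comm]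
  simp only [iidExpect, Finset.mul_sum]
  refine Finset.sum_congr rfl fun y _ => Finset.sum_congr rfl fun a _ => ?_
  simp only [Fin.consEquiv, Equiv.coe_fn_mk, Fin.prod_univ_succ, Fin.cons_zero, Fin.cons_succ]
  ring

def BoundedDifferences {ι : Type*} [DecidableEq ι] (f : (ι → α) → ℝ) (c : ℝ) : Prop :=
  ∀ x i a b, f (Function.update x i a) - f (Function.update x i b) ≤ c

lemma BoundedDifferences.sum_mul_cons (hq0 : ∀ a, 0 ≤ q a) (hq1 : ∑ a, q a = 1)
    {f : (Fin (n + 1) → α) → ℝ} {c : ℝ} (hf : BoundedDifferences f c) :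
    BoundedDifferences (fun y => ∑ a, q a * f (Fin.cons a y)) c := by
  intro y k a' b'
  rw [← Finset.sum_sub_distrib]
  calc ∑ a, (q a * f (Fin.cons a (Function.update y k a'))
        - q a * f (Fin.cons a (Function.update y k b')))
      ≤ ∑ a, q a * c := Finset.sum_le_sum fun a _ => by
        rw [← mul_sub, Fin.cons_update, Fin.cons_update]
        exact mul_le_mul_of_nonneg_left (hf _ _ _ _) (hq0 a)
    _ = c := by rw [← Finset.sum_mul, hq1, one_mul]

theorem iidExpect_exp_mul_le (hq0 : ∀ a, 0 ≤ q a) (hq1 : ∑ a, q a = 1)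
    {f : (Fin n → α) → ℝ} {c : ℝ} (hf : BoundedDifferences f c) (t : ℝ) :
    iidExpect q (fun x => exp (t * f x))
      ≤ exp (t ^ 2 * c ^ 2 / 8) ^ n * exp (t * iidExpect q f) := by
  induction n with
  | zero => simp [iidExpect]
  | succ n ih =>
    set g := fun y => ∑ a, q a * f (Fin.cons a y)
    have h_coord (y : Fin n → α) :
        ∑ a, q a * exp (t * f (Fin.cons a y)) ≤ exp (t ^ 2 * c ^ 2 / 8) * exp (t * g y) :=
      sum_mul_exp_le_of_sub_le hq0 hq1
        (fun a b => by simpa [Fin.update_cons_zero] using hf (Fin.cons a y) 0 a b) t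
    calc iidExpect q (fun x => exp (t * f x))
        = iidExpect q (fun y => ∑ a, q a * exp (t * f (Fin.cons a y))) := iidExpect_succ _
      _ ≤ iidExpect q (fun y => exp (t ^ 2 * c ^ 2 / 8) * exp (t * g y)) :=
        iidExpect_mono hq0 h_coord
      _ = exp (t ^ 2 * c ^ 2 / 8) * iidExpect q (fun y => exp (t * g y)) :=
        iidExpect_const_mul _ _
      _ ≤ exp (t ^ 2 * c ^ 2 / 8) * (exp (t ^ 2 * c ^ 2 / 8) ^ n * exp (t * iidExpect q g)) := by
        gcongr
        exact ih (hf.sum_mul_cons hq0 hq1)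
      _ = exp (t ^ 2 * c ^ 2 / 8) ^ (n + 1) * exp (t * iidExpect q f) := by
        rw [iidExpect_succ f, pow_succ]
        ring

theorem sum_prod_filter_le_exp (hq0 : ∀ a, 0 ≤ q a) (hq1 : ∑ a, q a = 1)
    {f : (Fin n → α) → ℝ} {c : ℝ} (hf : BoundedDifferences f c) (hn : 0 < n) (hc : 0 < c)
    {t : ℝ} (ht : 0 ≤ t) :
    ∑ x ∈ {x | iidExpect q f + t ≤ f x}, ∏ k, q (x k) ≤ exp (-2 * t ^ 2 / (n * c ^ 2)) := by
  -- `s` minimizes the Chernoff exponent `n s² c² / 8 - s t`.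
  set s := 4 * t / (n * c ^ 2)
  have h_weight (x : Fin n → α) : 0 ≤ ∏ k, q (x k) := Finset.prod_nonneg fun _ _ => hq0 _
  calc ∑ x ∈ {x | iidExpect q f + t ≤ f x}, ∏ k, q (x k)
      ≤ ∑ x, (∏ k, q (x k)) * exp (s * (f x - (iidExpect q f + t))) := by
        rw [Finset.sum_filter]
        refine Finset.sum_le_sum fun x _ => ?_
        split_ifs with hx
        · exact le_mul_of_one_le_right (h_weight x)
            (one_le_exp (mul_nonneg (by positivity) (by linarith)))
        · exact mul_nonneg (h_weight x) (exp_pos _).le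
    _ = iidExpect q (fun x => exp (s * f x)) * exp (-(s * (iidExpect q f + t))) := by
        unfold iidExpect
        rw [Finset.sum_mul]
        refine Finset.sum_congr rfl fun x _ => ?_
        rw [mul_assoc, ← exp_add, mul_sub, sub_eq_add_neg]
    _ ≤ exp (s ^ 2 * c ^ 2 / 8) ^ n * exp (s * iidExpect q f)
          * exp (-(s * (iidExpect q f + t))) := by
        gcongr
        exact iidExpect_exp_mul_le hq0 hq1 hf s
    _ = exp (-2 * t ^ 2 / (n * c ^ 2)) := by
        rw [← exp_nat_mul, ← exp_add, ← exp_add]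
        congr 1
        simp only [s]
        field_simp
        ring

end IID

lemma negMulLog_add_le {x y : ℝ} (hx : 0 ≤ x) (hy : 0 ≤ y) :
    negMulLog (x + y) ≤ negMulLog x + negMulLog y := by
  have h_log_mono {a b : ℝ} (ha : 0 ≤ a) (hab : a ≤ b) : a * log a ≤ a * log b := by
    rcases ha.eq_or_lt with rfl | ha
    · simp
    · exact mul_le_mul_of_nonneg_left (log_le_log ha hab) ha.le
  simp only [negMulLog]
  linarith [h_log_mono hx (le_add_of_nonneg_right hy), h_log_mono hy (le_add_of_nonneg_left hx)]

lemma negMulLog_le_negMulLog_add_add {x y : ℝ} (hx : 0 ≤ x) (hy : 0 ≤ y) (hxy : x + y ≤ 1) :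
    negMulLog x ≤ negMulLog (x + y) + y := by
  rcases hx.eq_or_lt with rfl | hx
  · rw [zero_add] at hxy ⊢
    simpa using add_nonneg (negMulLog_nonneg hy hxy) hy
  have h_log_nonpos : y * log (x + y) ≤ 0 :=
    mul_nonpos_of_nonneg_of_nonpos hy (log_nonpos (by linarith) hxy)
  have h_log_div : x * (log (x + y) - log x) ≤ y := by
    rw [← log_div (by linarith) hx.ne']
    calc x * log ((x + y) / x) ≤ x * ((x + y) / x - 1) :=
          mul_le_mul_of_nonneg_left (log_le_sub_one_of_pos (by positivity)) hx.le
      _ = y := by field_simp; ring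
  simp only [negMulLog]
  linarith

lemma abs_negMulLog_succ_div_sub_le {n a : ℕ} (hn : 2 ≤ n) (ha : a + 1 ≤ n) :
    |negMulLog ((a + 1) / n) - negMulLog (a / n)| ≤ log n / n := by
  have hn0 : (0 : ℝ) < n := by positivity
  have h_split : ((a : ℝ) + 1) / n = a / n + 1 / n := by ring
  have h_one : negMulLog (1 / n) = log n / n := by
    rw [negMulLog, one_div, log_inv]
    ring
  have h_le_one : (a : ℝ) / n + 1 / n ≤ 1 := by
    rw [← h_split, div_le_one hn0]
    exact_mod_cast ha
  rw [abs_sub_le_iff, h_split]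
  refine ⟨by linarith [negMulLog_add_le (x := a / n) (y := 1 / n) (by positivity) (by positivity)],
    ?_⟩
  have h_lower := negMulLog_le_negMulLog_add_add (x := a / n) (y := 1 / n) (by positivity)
    (by positivity) h_le_one
  -- For `n = 2, a = 1` the bound is attained, and `1 / n ≤ log n / n` needs `n ≥ 3`.
  rcases hn.eq_or_lt with rfl | hn3
  · obtain rfl | rfl : a = 0 ∨ a = 1 := by omega
    · simp only [Nat.cast_zero, zero_div, negMulLog_zero, zero_add, zero_sub, neg_le]
      linarith [h_one, log_nonneg (by norm_num : (1 : ℝ) ≤ 2)]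
    · norm_num at h_one ⊢
      linarith
  · have h_log : 1 ≤ log n := by
      rw [le_log_iff_exp_le hn0]
      linarith [exp_one_lt_d9, (show (3 : ℝ) ≤ n by exact_mod_cast hn3)]
    have : 1 / (n : ℝ) ≤ log n / n := div_le_div_of_nonneg_right h_log hn0.le
    linarith

section EmpiricalEntropy

open Finset

lemma card_filter_update_eq {α : Type*} [DecidableEq α] {n : ℕ} (x : Fin n → α) (k : Fin n)
    (a i : α) :
    #{l | Function.update x k a l = i}
      = #{l ∈ univ.erase k | x l = i} + if a = i then 1 else 0 := by
  rw [← insert_erase (mem_univ k), filter_insert, Function.update_self, erase_insert_eq_erase,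
    erase_eq_of_notMem (notMem_erase k univ)]
  have h_erase : {l ∈ univ.erase k | Function.update x k a l = i} = {l ∈ univ.erase k | x l = i} :=
    filter_congr fun l hl => by rw [Function.update_of_ne (ne_of_mem_erase hl)]
  split_ifs <;> simp [h_erase, card_insert_of_notMem]

variable {α : Type*} [Fintype α] {n : ℕ}

noncomputable def shannonEntropy (q : α → ℝ) : ℝ := -∑ i, q i * logb 2 (q i)

lemma shannonEntropy_eq_sum_negMulLog (q : α → ℝ) :
    shannonEntropy q = ∑ i, negMulLog (q i) / log 2 := by
  rw [shannonEntropy, ← sum_neg_distrib]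
  exact sum_congr rfl fun i _ => by rw [logb, negMulLog]; ring

variable [DecidableEq α]

noncomputable def empiricalFreq (x : Fin n → α) (i : α) : ℝ := #{k | x k = i} / n

lemma sum_comp_add_ite_eq (g : ℕ → ℝ) (b : α → ℕ) (a : α) :
    ∑ i, g (b i + if a = i then 1 else 0) = ∑ i, g (b i) + (g (b a + 1) - g (b a)) := by
  have h_term (i : α) :
      g (b i + if a = i then 1 else 0) = g (b i) + if a = i then g (b a + 1) - g (b a) else 0 := by
    split_ifs with h
    · subst h; ring
    · simp
  simp only [h_term, sum_add_distrib, sum_ite_eq, mem_univ, if_true]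

lemma boundedDifferences_shannonEntropy_empiricalFreq (hn : 2 ≤ n) :
    BoundedDifferences (fun x : Fin n → α => shannonEntropy (empiricalFreq x))
      (2 * logb 2 n / n) := by
  intro x k a b
  set cnt : α → ℕ := fun i => #{l ∈ univ.erase k | x l = i}
  set ψ : ℕ → ℝ := fun j => negMulLog (j / n) / log 2
  have h_update (a : α) : shannonEntropy (empiricalFreq (Function.update x k a))
      = ∑ i, ψ (cnt i) + (ψ (cnt a + 1) - ψ (cnt a)) := by
    rw [shannonEntropy_eq_sum_negMulLog, ← sum_comp_add_ite_eq]
    simp only [empiricalFreq, card_filter_update_eq, ψ, cnt]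
  have h_step (j : α) : |ψ (cnt j + 1) - ψ (cnt j)| ≤ logb 2 n / n := by
    have h_cnt : cnt j + 1 ≤ n := by
      have : cnt j ≤ #(univ.erase k) := card_filter_le _ _
      rw [card_erase_of_mem (mem_univ k), card_univ, Fintype.card_fin] at this
      omega
    have h_log2 : 0 < log 2 := log_pos one_lt_two
    simp only [ψ, ← sub_div, abs_div, abs_of_pos h_log2, Nat.cast_add, Nat.cast_one]
    rw [logb, div_right_comm]
    exact div_le_div_of_nonneg_right (abs_negMulLog_succ_div_sub_le hn h_cnt) h_log2.le
  dsimp only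
  rw [h_update, h_update, mul_div_assoc, two_mul]
  linarith [abs_le.mp (h_step a), abs_le.mp (h_step b)]

variable {q : α → ℝ}

lemma iidExpect_ite_apply_eq (hq1 : ∑ a, q a = 1) (k : Fin n) (i : α) :
    iidExpect q (fun x => if x k = i then 1 else 0) = q i := by
  set g : Fin n → α → ℝ := fun l a => if l = k then (if a = i then q a else 0) else q a
  have h_prod (x : Fin n → α) :
      (∏ l, q (x l)) * (if x k = i then 1 else 0) = ∏ l, g l (x l) := by
    rw [← mul_prod_erase univ _ (mem_univ k), ← mul_prod_erase univ _ (mem_univ k),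
      prod_congr rfl fun l hl => if_neg (ne_of_mem_erase hl)]
    simp only [g, if_true]
    split_ifs <;> ring
  have h_sum (l : Fin n) : ∑ a, g l a = if l = k then q i else 1 := by
    split_ifs with hl <;> simp [g, hl, hq1]
  simp only [iidExpect, h_prod, ← Fintype.prod_sum, h_sum, prod_ite_eq', mem_univ, if_true]

lemma iidExpect_empiricalFreq (hq1 : ∑ a, q a = 1) (hn : n ≠ 0) (i : α) :
    iidExpect q (fun x : Fin n → α => empiricalFreq x i) = q i := by
  have h_freq (x : Fin n → α) :
      empiricalFreq x i = (n : ℝ)⁻¹ * ∑ k, if x k = i then 1 else 0 := by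
    rw [empiricalFreq, card_filter, inv_mul_eq_div]
    push_cast
    rfl
  simp only [h_freq, iidExpect_const_mul, iidExpect_sum, iidExpect_ite_apply_eq hq1, sum_const,
    card_univ, Fintype.card_fin, nsmul_eq_mul]
  field_simp

lemma iidExpect_shannonEntropy_empiricalFreq_le (hq0 : ∀ a, 0 ≤ q a) (hq1 : ∑ a, q a = 1)
    (hn : n ≠ 0) :
    iidExpect q (fun x : Fin n → α => shannonEntropy (empiricalFreq x)) ≤ shannonEntropy q := by
  simp only [shannonEntropy_eq_sum_negMulLog, iidExpect_sum]
  gcongr with i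
  have h_jensen := concaveOn_negMulLog.le_map_sum (t := univ)
    (w := fun x : Fin n → α => ∏ k, q (x k)) (p := fun x => empiricalFreq x i) (fun x _ => prod_nonneg fun _ _ => hq0 _)
    (sum_prod_eq_one hq1) (fun x _ => Set.mem_Ici.2 (by unfold empiricalFreq; positivity))
  rw [iidExpect_div_const]
  gcongr
  rw [← iidExpect_empiricalFreq hq1 hn i]
  simpa only [smul_eq_mul, iidExpect] using h_jensen

theorem sum_prod_filter_shannonEntropy_le (hq0 : ∀ a, 0 ≤ q a) (hq1 : ∑ a, q a = 1)
    (hn : 2 ≤ n) {ε : ℝ} (hε₀ : 0 < ε) (hε₁ : ε ≤ 1) :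
    ∑ x ∈ {x : Fin n → α | shannonEntropy q + √(2 * logb 2 n ^ 2 * log (2 / ε) / n)
        ≤ shannonEntropy (empiricalFreq x)}, ∏ k, q (x k) ≤ ε := by
  have hL : 0 < logb 2 n := logb_pos one_lt_two (by exact_mod_cast hn)
  have h_arg : 0 ≤ 2 * logb 2 n ^ 2 * log (2 / ε) / n := by
    have := log_nonneg (show (1 : ℝ) ≤ 2 / ε by rw [le_div_iff₀ hε₀]; linarith)
    positivity
  calc _ ≤ ∑ x ∈ {x : Fin n → α | iidExpect q (fun x => shannonEntropy (empiricalFreq x))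
          + √(2 * logb 2 n ^ 2 * log (2 / ε) / n) ≤ shannonEntropy (empiricalFreq x)},
          ∏ k, q (x k) := by
        refine sum_le_sum_of_subset_of_nonneg (fun x => ?_)
          fun x _ _ => prod_nonneg fun _ _ => hq0 _
        simp only [mem_filter, mem_univ, true_and]
        intro hx
        linarith [iidExpect_shannonEntropy_empiricalFreq_le hq0 hq1 (by omega : n ≠ 0)]
    _ ≤ exp (-2 * √(2 * logb 2 n ^ 2 * log (2 / ε) / n) ^ 2 / (n * (2 * logb 2 n / n) ^ 2)) :=
        sum_prod_filter_le_exp hq0 hq1 (boundedDifferences_shannonEntropy_empiricalFreq hn)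
          (by omega) (by positivity) (sqrt_nonneg _)
    _ = ε / 2 := by
        have hn0 : (n : ℝ) ≠ 0 := by positivity
        rw [sq_sqrt h_arg, show -2 * (2 * logb 2 n ^ 2 * log (2 / ε) / n)
            / (n * (2 * logb 2 n / n) ^ 2) = -log (2 / ε) by field_simp,
          exp_neg, exp_log (by positivity), inv_div]
    _ ≤ ε := by linarith

end EmpiricalEntropy

lemma cond_apply_le_div {Ω : Type*} [MeasurableSpace Ω] (μ : Measure Ω) (s t : Set Ω) :
    μ[t | s] ≤ μ t / μ s := by
  rw [ProbabilityTheory.cond, Measure.smul_apply, smul_eq_mul, ENNReal.div_eq_inv_mul]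
  exact mul_le_mul_right (Measure.restrict_apply_le s t) _

lemma measure_preimage_finset_eq_sum_prod {Ω ι α : Type*} [MeasurableSpace Ω] {μ : Measure Ω}
    [Fintype ι] [MeasurableSpace α] [MeasurableSingletonClass α] {U : ι → Ω → α}
    (hmeas : ∀ k, Measurable (U k)) (hindep : iIndepFun U μ) (s : Finset (ι → α)) :
    μ ((fun ω k => U k ω) ⁻¹' s) = ∑ x ∈ s, ∏ k, μ (U k ⁻¹' {x k}) := by
  have h_fiber (x : ι → α) : (fun ω k => U k ω) ⁻¹' {x} = ⋂ k, U k ⁻¹' {x k} := by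
    ext ω
    simp [funext_iff]
  rw [← sum_measure_preimage_singleton s fun x _ => by
    rw [h_fiber]; exact .iInter fun k => hmeas k (measurableSet_singleton _)]
  refine Finset.sum_congr rfl fun x _ => ?_
  rw [h_fiber, hindep.meas_iInter fun k => ⟨{x k}, measurableSet_singleton _, rfl⟩]

lemma measure_preimage_finset_eq_ofReal_sum_prod {Ω ι α : Type*} [MeasurableSpace Ω]
    {μ : Measure Ω} [IsFiniteMeasure μ] [Fintype ι] [MeasurableSpace α]
    [MeasurableSingletonClass α] {U : ι → Ω → α} (hmeas : ∀ k, Measurable (U k))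
    (hindep : iIndepFun U μ) {p : α → ℝ} (hp : ∀ k i, μ.real (U k ⁻¹' {i}) = p i)
    (s : Finset (ι → α)) :
    μ ((fun ω k => U k ω) ⁻¹' s) = ENNReal.ofReal (∑ x ∈ s, ∏ k, p (x k)) := by
  have hp_nonneg (k : ι) (i : α) : 0 ≤ p i := hp k i ▸ measureReal_nonneg
  rw [measure_preimage_finset_eq_sum_prod hmeas hindep,
    ENNReal.ofReal_sum_of_nonneg fun x _ => Finset.prod_nonneg fun k _ => hp_nonneg k _]
  refine Finset.sum_congr rfl fun x _ => ?_
  rw [ENNReal.ofReal_prod_of_nonneg fun k _ => hp_nonneg k _]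
  refine Finset.prod_congr rfl fun k _ => ?_
  rw [← hp, measureReal_def, ENNReal.ofReal_toReal (measure_ne_top _ _)]

theorem entropy_lower_bound_from_empirical_conditioned_general
    {Ω : Type*} [MeasurableSpace Ω] (μ : Measure Ω) [IsProbabilityMeasure μ]
    (m n : ℕ) (hn : 2 ≤ n)
    (U : Fin n → Ω → Fin m)
    (hmeas : ∀ k, Measurable (U k))
    (hindep : iIndepFun U μ)
    (p : Fin m → ℝ) (hp : ∀ k i, (μ {ω | U k ω = i}).toReal = p i)
    (phat : Fin m → Ω → ℝ)
    (hphat : ∀ i ω, phat i ω = ((Finset.univ.filter fun k => U k ω = i).card : ℝ) / n)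
    (Hmle : Ω → ℝ)
    (hHmle : ∀ ω, Hmle ω = -∑ i : Fin m, phat i ω * Real.logb 2 (phat i ω))
    (A : Set Ω)
    (hpA : 0 < (μ A).toReal)
    (ε : ℝ) (hε₀ : 0 < ε) (hε₁ : ε ≤ 1) :
    μ[|A] {ω | -∑ i : Fin m, p i * Real.logb 2 (p i)
          ≤ Hmle ω - Real.sqrt (2 * (Real.logb 2 n) ^ 2 * Real.log (2 / ε) / n)}
      ≤ ENNReal.ofReal (ε / (μ A).toReal) := by
  obtain ⟨k₀⟩ : Nonempty (Fin n) := ⟨⟨0, by omega⟩⟩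
  have hp_nonneg (i : Fin m) : 0 ≤ p i := hp k₀ i ▸ ENNReal.toReal_nonneg
  have hp_sum : ∑ i, p i = 1 := by
    have h_total := sum_measureReal_preimage_singleton (μ := μ) Finset.univ
      fun i _ => hmeas k₀ (measurableSet_singleton i)
    simp only [Finset.coe_univ, Set.preimage_univ, probReal_univ] at h_total
    exact (Finset.sum_congr rfl fun i _ => (hp k₀ i).symm).trans h_total
  set T : Finset (Fin n → Fin m) := {x | shannonEntropy p
    + √(2 * logb 2 n ^ 2 * log (2 / ε) / n) ≤ shannonEntropy (empiricalFreq x)}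
  have h_event : {ω | -∑ i, p i * logb 2 (p i) ≤ Hmle ω - √(2 * logb 2 n ^ 2 * log (2 / ε) / n)}
      = (fun ω k => U k ω) ⁻¹' T := by
    ext ω
    simp [T, hHmle, hphat, le_sub_iff_add_le, shannonEntropy, empiricalFreq]
  calc _ ≤ μ ((fun ω k => U k ω) ⁻¹' T) / μ A := h_event ▸ cond_apply_le_div μ A _
    _ = ENNReal.ofReal (∑ x ∈ T, ∏ k, p (x k)) / μ A := by
      rw [measure_preimage_finset_eq_ofReal_sum_prod hmeas hindep hp]
    _ ≤ ENNReal.ofReal ε / μ A := by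
      gcongr
      exact sum_prod_filter_shannonEntropy_le hp_nonneg hp_sum hn hε₀ hε₁
    _ = ENNReal.ofReal (ε / (μ A).toReal) := by
      rw [ENNReal.ofReal_div_of_pos hpA, ENNReal.ofReal_toReal (measure_ne_top _ _)]

/-- **Conditioned version of the entropy lower bound.** For `n ≥ 2` i.i.d. samples from a
distribution `p` on a finite alphabet of size `m`, with empirical entropy `Ĥ_MLE` and
Shannon entropy `H(p)`, and any event `A` measurable with respect to the σ-algebra
generated by the samples with `Pr[A] > 0`, for every `ε ∈ (0, 1]` the probability under
the conditional law given `A` that `H(p) ≤ Ĥ_MLE - √(2 (log₂ n)² ln(2/ε) / n)` is at most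
`ε / Pr[A]`. -/
theorem entropy_lower_bound_from_empirical_conditioned
    {Ω : Type*} [MeasurableSpace Ω] (μ : Measure Ω) [IsProbabilityMeasure μ]
    (m n : ℕ) (hm : 1 ≤ m) (hn : 2 ≤ n)
    (U : Fin n → Ω → Fin m)
    (hmeas : ∀ k, Measurable (U k))
    (hindep : iIndepFun U μ)
    (p : Fin m → ℝ) (hp : ∀ k i, (μ {ω | U k ω = i}).toReal = p i)
    (phat : Fin m → Ω → ℝ)
    (hphat : ∀ i ω, phat i ω = ((Finset.univ.filter fun k => U k ω = i).card : ℝ) / n)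
    (Hmle : Ω → ℝ)
    (hHmle : ∀ ω, Hmle ω = -∑ i : Fin m, phat i ω * Real.logb 2 (phat i ω))
    (A : Set Ω)
    (hA : MeasurableSet[⨆ k, MeasurableSpace.comap (U k) (inferInstance : MeasurableSpace (Fin m))] A)
    (hpA : 0 < (μ A).toReal)
    (ε : ℝ) (hε₀ : 0 < ε) (hε₁ : ε ≤ 1) :
    μ[|A] {ω | -∑ i : Fin m, p i * Real.logb 2 (p i)
          ≤ Hmle ω - Real.sqrt (2 * (Real.logb 2 n) ^ 2 * Real.log (2 / ε) / n)}
      ≤ ENNReal.ofReal (ε / (μ A).toReal) :=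
  entropy_lower_bound_from_empirical_conditioned_general μ m n hn U hmeas hindep p hp phat hphat
    Hmle hHmle A hpA ε hε₀ hε₁
end
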